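/- On two qubits, the controlled-S gate CS (the diagonal matrix with (z,z) entry equal to i if z = (1,1) and 1 otherwise) is proportional to a product of three π/8 phase-parity operators: there exists ω : ℂ with |ω| = 1 such that CS = ω • (D_{{0},3} · D_{{1},3} · D_{{0,1},3}⁻¹). -/

import Mathlib

noncomputable section

/-- The parity operator `Z_S`: the diagonal matrix whose `(z,z)` entry is
`(-1) ^ (∑ j ∈ S, z j)`. -/
def Zgad (n : ℕ) (S : Finset (Fin n)) : Matrix (Fin n → Fin 2) (Fin n → Fin 2) ℂ :=
  Matrix.diagonal fun z => (-1 : ℂ) ^ (∑ j ∈ S, (z j : ℕ))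

/-- `D_{S,3} = exp(-(π i/8) • Z_S)` on two qubits. -/
def D3 (S : Finset (Fin 2)) : Matrix (Fin 2 → Fin 2) (Fin 2 → Fin 2) ℂ :=
  NormedSpace.exp ((-(↑Real.pi * Complex.I / 8)) • Zgad 2 S)

/-- The inverse `D_{S,3}⁻¹ = exp(+(π i/8) • Z_S)` on two qubits. -/
def D3inv (S : Finset (Fin 2)) : Matrix (Fin 2 → Fin 2) (Fin 2 → Fin 2) ℂ :=
  NormedSpace.exp ((↑Real.pi * Complex.I / 8) • Zgad 2 S)

/-- The controlled-`S` gate. -/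
def CS : Matrix (Fin 2 → Fin 2) (Fin 2 → Fin 2) ℂ :=
  Matrix.diagonal fun z => if z 0 = 1 ∧ z 1 = 1 then Complex.I else 1

lemma exp_smul_diag (c : ℂ) (v : (Fin 2 → Fin 2) → ℂ) :
    NormedSpace.exp (c • Matrix.diagonal v)
      = Matrix.diagonal (fun z => Complex.exp (c * v z)) := by
  rw [← Matrix.diagonal_smul, Matrix.exp_diagonal]
  refine congrArg Matrix.diagonal (funext fun z => ?_)
  rw [Pi.coe_exp]
  simp [Complex.exp_eq_exp_ℂ, smul_eq_mul]

lemma exp_pi_I_div_two : Complex.exp (↑Real.pi * Complex.I / 2) = Complex.I := by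
  have h : (↑Real.pi * Complex.I / 2 : ℂ) = (↑(Real.pi / 2) : ℂ) * Complex.I := by
    push_cast; ring
  rw [h, Complex.exp_mul_I, ← Complex.ofReal_cos, ← Complex.ofReal_sin,
    Real.cos_pi_div_two, Real.sin_pi_div_two]
  simp

theorem stmt8 :
    ∃ ω : ℂ, ‖ω‖ = 1 ∧
      CS = ω • (D3 {0} * D3 {1} * D3inv {0, 1}) := by
  set c : ℂ := (↑Real.pi * Complex.I / 8) with hc
  refine ⟨Complex.exp c, ?_, ?_⟩
  · rw [Complex.norm_exp]
    simp [hc, Complex.div_re, Complex.mul_re]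
  · rw [D3, D3, D3inv, Zgad, Zgad, Zgad, exp_smul_diag, exp_smul_diag, exp_smul_diag,
      Matrix.diagonal_mul_diagonal, Matrix.diagonal_mul_diagonal, CS,
      ← Matrix.diagonal_smul]
    refine congrArg Matrix.diagonal (funext fun z => ?_)
    simp only [Pi.smul_apply, smul_eq_mul]
    have h0 : z 0 = 0 ∨ z 0 = 1 := by omega
    have h1 : z 1 = 0 ∨ z 1 = 1 := by omega
    have key : ∀ a b d : ℂ, Complex.exp c * (Complex.exp a * Complex.exp b * Complex.exp d)
        = Complex.exp (c + a + b + d) := by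
      intro a b d
      rw [← Complex.exp_add, ← Complex.exp_add, ← Complex.exp_add]
      ring_nf
    rcases h0 with h0 | h0 <;> rcases h1 with h1 | h1 <;>
      simp only [h0, h1, Finset.sum_singleton, Finset.sum_insert, Finset.mem_singleton,
        Fin.zero_ne_one, not_false_iff, Fin.val_zero, Fin.val_one, pow_zero, pow_one,
        Nat.add_zero, Nat.zero_add, mul_one, key]
    · rw [show c + -(↑Real.pi * Complex.I / 8) + -(↑Real.pi * Complex.I / 8)
            + ↑Real.pi * Complex.I / 8 = 0 by rw [hc]; ring, Complex.exp_zero]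
      norm_num
    · rw [show c + -(↑Real.pi * Complex.I / 8) + -(↑Real.pi * Complex.I / 8) * (-1)
            + ↑Real.pi * Complex.I / 8 * (-1) = 0 by rw [hc]; ring, Complex.exp_zero]
      norm_num
    · rw [show c + -(↑Real.pi * Complex.I / 8) * (-1) + -(↑Real.pi * Complex.I / 8)
            + ↑Real.pi * Complex.I / 8 * (-1) = 0 by rw [hc]; ring, Complex.exp_zero]
      norm_num
    · rw [show c + -(↑Real.pi * Complex.I / 8) * (-1) + -(↑Real.pi * Complex.I / 8) * (-1)
            + ↑Real.pi * Complex.I / 8 * ((-1 : ℂ)) ^ (1 + 1 : ℕ)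
            = ↑Real.pi * Complex.I / 2 by rw [hc]; ring, exp_pi_I_div_two]
      norm_num
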